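/- Let π : (Y,T₁,…,T_d) → (X,T₁,…,T_d) be a factor map between minimal distal ℤ^d-systems. If (Y,T₁,…,T_d) has the unique closing parallelepiped property, then (X,T₁,…,T_d) has the unique closing parallelepiped property. -/

import Mathlib

open Function Set

/-- The group of self-homeomorphisms of a topological space, under composition. -/
instance homeomorphGroup {X : Type*} [TopologicalSpace X] : Group (X ≃ₜ X) where
  mul f g := g.trans f
  one := Homeomorph.refl X
  inv := Homeomorph.symm
  mul_assoc _ _ _ := rfl
  one_mul _ := Homeomorph.ext fun _ => rfl
  mul_one _ := Homeomorph.ext fun _ => rfl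
  inv_mul_cancel f := Homeomorph.self_trans_symm f

variable {d : ℕ}

/-- The homeomorphism `T₁^{n₁ε₁} ⋯ T_d^{n_dε_d}` associated with `n ∈ ℤ^d` and a vertex
`ε ∈ {0,1}^d` of the cube. -/
def cubeMap {X : Type*} [TopologicalSpace X] (T : Fin d → X ≃ₜ X)
    (n : Fin d → ℤ) (ε : Fin d → Bool) : X ≃ₜ X :=
  ((List.finRange d).map (fun i => T i ^ (if ε i then n i else 0))).prod

/-- The space of directional dynamical cubes `Q_{T₁,…,T_d}(X)`. -/
def cubes {X : Type*} [TopologicalSpace X] (T : Fin d → X ≃ₜ X) :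
    Set ((Fin d → Bool) → X) :=
  closure {y | ∃ (x : X) (n : Fin d → ℤ), ∀ ε, y ε = cubeMap T n ε x}

/-- The group of homeomorphisms generated by `T₁,…,T_d`. -/
def genGroup {X : Type*} [TopologicalSpace X] (T : Fin d → X ≃ₜ X) : Subgroup (X ≃ₜ X) :=
  Subgroup.closure (Set.range T)

/-- Minimality: every orbit is dense. -/
def IsMinimalSystem {X : Type*} [TopologicalSpace X] (T : Fin d → X ≃ₜ X) : Prop :=
  ∀ x : X, Dense {y : X | ∃ g ∈ genGroup T, g x = y}

/-- Distality: `inf_{g ∈ G} dist (g x) (g y) > 0` whenever `x ≠ y`. -/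
def IsDistalSystem {X : Type*} [MetricSpace X] (T : Fin d → X ≃ₜ X) : Prop :=
  ∀ x y : X, x ≠ y → ∃ δ > 0, ∀ g ∈ genGroup T, δ ≤ dist (g x) (g y)

/-- Unique closing parallelepiped property: two cubes agreeing in `2^d - 1` of their
coordinates are equal. -/
def HasUCP {X : Type*} [TopologicalSpace X] (T : Fin d → X ≃ₜ X) : Prop :=
  ∀ x ∈ cubes T, ∀ y ∈ cubes T,
    ∀ ε₀ : Fin d → Bool, (∀ ε, ε ≠ ε₀ → x ε = y ε) → x = y

/-!
Lift two cubes of `X` that differ only at the vertex `ε₀` to cubes `C, C'` of `Y`. The action of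
the face transformations together with the diagonal action of `G` on `Q(Y)` is distal, so its
orbit closures are minimal: the orbit closure of `(C, C')` contains a pair `(V, y₀^{[d]})`, and by
distality of `X` the cube `π ∘ V` still differs from `π y₀` exactly at `ε₀`. Repeating this with
`(V, V')`, where `V'` is `V` with its face `{ε | ε i = ε₀ i}` replaced by the opposite one, makes
`V` equal to `y₀` off `ε₀` one direction at a time. The unique closing parallelepiped property of
`Y` then gives `V = y₀^{[d]}`, contradicting `π (V ε₀) ≠ π y₀`.
-/

section HomeomorphGroup

variable {X : Type*} [TopologicalSpace X]

@[simp] lemma homeomorphGroup_mul_apply (f g : X ≃ₜ X) (x : X) : (f * g) x = f (g x) := rfl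

lemma self_mem_genGroup (T : Fin d → X ≃ₜ X) (i : Fin d) : T i ∈ genGroup T :=
  Subgroup.subset_closure ⟨i, rfl⟩

lemma commute_of_mem_genGroup {T : Fin d → X ≃ₜ X} (hcomm : ∀ i j, Commute (T i) (T j))
    {g h : X ≃ₜ X} (hg : g ∈ genGroup T) (hh : h ∈ genGroup T) : Commute g h := by
  have hab : IsMulCommutative (genGroup T) := Subgroup.isMulCommutative_closure <| by
    rintro _ ⟨i, rfl⟩ _ ⟨j, rfl⟩
    exact hcomm i j
  exact (Subgroup.le_centralizer_iff_isMulCommutative.mpr hab hg h hh).symm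

end HomeomorphGroup

section ZpowProd

variable {G H : Type*} [Group G] [Group H]

def zpowProd (a : Fin d → G) (e : Fin d → ℤ) : G :=
  ((List.finRange d).map fun i => a i ^ e i).prod

lemma zpowProd_mem {K : Subgroup G} {a : Fin d → G} (ha : ∀ i, a i ∈ K) (e : Fin d → ℤ) :
    zpowProd a e ∈ K :=
  K.list_prod_mem <| by
    simp only [List.mem_map]
    rintro _ ⟨i, -, rfl⟩
    exact K.zpow_mem (ha i) _

lemma MonoidHom.map_zpowProd (f : G →* H) (a : Fin d → G) (e : Fin d → ℤ) :
    f (zpowProd a e) = zpowProd (f ∘ a) e := by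
  simp [zpowProd, map_list_prod, List.map_map, Function.comp_def]

lemma zpowProd_zero (a : Fin d → G) : zpowProd a 0 = 1 := by
  simp [zpowProd]

lemma zpowProd_add {a : Fin d → G} (hcomm : ∀ i j, Commute (a i) (a j)) (e f : Fin d → ℤ) :
    zpowProd a (e + f) = zpowProd a e * zpowProd a f := by
  suffices ∀ l : List (Fin d), (l.map fun i => a i ^ (e i + f i)).prod =
      (l.map fun i => a i ^ e i).prod * (l.map fun i => a i ^ f i).prod from this _
  intro l
  induction l with
  | nil => simp
  | cons i l ih =>
    have hc : Commute (a i ^ f i) ((l.map fun j => a j ^ e j).prod) :=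
      Commute.list_prod_right _ _ <| by
        simp only [List.mem_map]
        rintro _ ⟨j, -, rfl⟩
        exact (hcomm i j).zpow_zpow _ _
    simp only [List.map_cons, List.prod_cons]
    rw [ih, zpow_add, mul_assoc, ← mul_assoc (a i ^ f i), hc.eq, mul_assoc, mul_assoc]

end ZpowProd

section CubeMap

variable {X : Type*} [TopologicalSpace X] {T : Fin d → X ≃ₜ X}

lemma cubeMap_eq_zpowProd (T : Fin d → X ≃ₜ X) (n : Fin d → ℤ) (ε : Fin d → Bool) :
    cubeMap T n ε = zpowProd T fun i => if ε i then n i else 0 := rfl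

lemma cubeMap_mem_genGroup (T : Fin d → X ≃ₜ X) (n : Fin d → ℤ) (ε : Fin d → Bool) :
    cubeMap T n ε ∈ genGroup T :=
  zpowProd_mem (self_mem_genGroup T) _

lemma cubeMap_zero (T : Fin d → X ≃ₜ X) (ε : Fin d → Bool) : cubeMap T 0 ε = 1 := by
  rw [cubeMap_eq_zpowProd, ← zpowProd_zero T]
  congr 1
  funext i
  simp

lemma cubeMap_add (hcomm : ∀ i j, Commute (T i) (T j)) (n m : Fin d → ℤ) (ε : Fin d → Bool) :
    cubeMap T (n + m) ε = cubeMap T n ε * cubeMap T m ε := by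
  rw [cubeMap_eq_zpowProd, cubeMap_eq_zpowProd, cubeMap_eq_zpowProd, ← zpowProd_add hcomm]
  congr 1
  funext i
  cases h : ε i <;> simp [h]

end CubeMap

section Intertwining

variable {Y X : Type*} [TopologicalSpace Y] [TopologicalSpace X]
  {S : Fin d → Y ≃ₜ Y} {T : Fin d → X ≃ₜ X} {π : Y → X}

def intertwiners (π : Y → X) : Subgroup ((Y ≃ₜ Y) × (X ≃ₜ X)) where
  carrier := {p | ∀ y, π (p.1 y) = p.2 (π y)}
  mul_mem' {p q} hp hq y := show π (p.1 (q.1 y)) = p.2 (q.2 (π y)) by rw [hp, hq]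
  one_mem' _ := rfl
  inv_mem' {p} hp y := show π (p.1.symm y) = p.2.symm (π y) from
    (p.2.symm_apply_eq.2 (by rw [← hp, p.1.apply_symm_apply])).symm

lemma closure_le_intertwiners (hfac : ∀ i y, π (S i y) = T i (π y)) :
    Subgroup.closure (range fun i => (S i, T i)) ≤ intertwiners π :=
  Subgroup.closure_le _ |>.2 <| by
    rintro _ ⟨i, rfl⟩
    exact hfac i

lemma map_cubeMap_apply (hfac : ∀ i y, π (S i y) = T i (π y)) (n : Fin d → ℤ)
    (ε : Fin d → Bool) (y : Y) : π (cubeMap S n ε y) = cubeMap T n ε (π y) := by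
  have hmem := closure_le_intertwiners hfac <|
    zpowProd_mem (K := Subgroup.closure (range fun i => (S i, T i)))
      (fun i => Subgroup.subset_closure ⟨i, rfl⟩) fun i => if ε i then n i else 0
  rw [cubeMap_eq_zpowProd, cubeMap_eq_zpowProd]
  convert hmem y
  · exact ((MonoidHom.fst (Y ≃ₜ Y) (X ≃ₜ X)).map_zpowProd (fun i => (S i, T i)) _).symm
  · exact ((MonoidHom.snd (Y ≃ₜ Y) (X ≃ₜ X)).map_zpowProd (fun i => (S i, T i)) _).symm

lemma exists_intertwining_of_mem_genGroup (hfac : ∀ i y, π (S i y) = T i (π y))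
    {g : Y ≃ₜ Y} (hg : g ∈ genGroup S) : ∃ h ∈ genGroup T, ∀ y, π (g y) = h (π y) := by
  have hS : range S = MonoidHom.fst _ _ '' range fun i => (S i, T i) := by
    rw [← range_comp]; rfl
  rw [genGroup, hS, ← MonoidHom.map_closure] at hg
  obtain ⟨p, hp, rfl⟩ := Subgroup.mem_map.1 hg
  refine ⟨p.2, ?_, closure_le_intertwiners hfac hp⟩
  have hT : range T = MonoidHom.snd _ _ '' range fun i => (S i, T i) := by
    rw [← range_comp]; rfl
  rw [genGroup, hT, ← MonoidHom.map_closure]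
  exact Subgroup.mem_map_of_mem _ hp

end Intertwining

section Cubes

variable {X : Type*} [TopologicalSpace X] {T : Fin d → X ≃ₜ X}

def cubePt (T : Fin d → X ≃ₜ X) (n : Fin d → ℤ) (x : X) : (Fin d → Bool) → X :=
  fun ε => cubeMap T n ε x

lemma cubePt_mem_cubes (T : Fin d → X ≃ₜ X) (n : Fin d → ℤ) (x : X) : cubePt T n x ∈ cubes T :=
  subset_closure ⟨x, n, fun _ => rfl⟩

lemma const_mem_cubes (T : Fin d → X ≃ₜ X) (x : X) : (fun _ => x) ∈ cubes T := by
  convert cubePt_mem_cubes T 0 x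
  simp [cubePt, cubeMap_zero]

lemma continuous_cubePt (T : Fin d → X ≃ₜ X) (n : Fin d → ℤ) : Continuous (cubePt T n) :=
  continuous_pi fun ε => (cubeMap T n ε).continuous

lemma mapsTo_cubes {F : ((Fin d → Bool) → X) → (Fin d → Bool) → X} (hF : Continuous F)
    (hpt : ∀ n x, ∃ n' x', F (cubePt T n x) = cubePt T n' x') :
    MapsTo F (cubes T) (cubes T) := by
  refine MapsTo.closure ?_ hF
  rintro _ ⟨x, n, hc⟩
  obtain ⟨n', x', h⟩ := hpt n x
  rw [show _ = cubePt T n x from funext hc, h]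
  exact ⟨x', n', fun _ => rfl⟩

lemma exists_map_eq_of_mem_cubes {Y : Type*} [TopologicalSpace Y] [CompactSpace Y] [T2Space X]
    {S : Fin d → Y ≃ₜ Y} {π : Y → X} (hπ : Continuous π) (hsurj : Surjective π)
    (hfac : ∀ i y, π (S i y) = T i (π y)) {c : (Fin d → Bool) → X} (hc : c ∈ cubes T) :
    ∃ C ∈ cubes S, π ∘ C = c := by
  have hclosed : IsClosed ((π ∘ ·) '' cubes S) := by
    have hπc : Continuous fun C : (Fin d → Bool) → Y => π ∘ C :=
      continuous_pi fun ε => hπ.comp (continuous_apply ε)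
    exact (isClosed_closure.isCompact.image hπc).isClosed
  refine closure_minimal ?_ hclosed hc
  rintro c' ⟨x, n, hc'⟩
  obtain ⟨y, rfl⟩ := hsurj x
  refine ⟨cubePt S n y, cubePt_mem_cubes S n y, funext fun ε => ?_⟩
  rw [hc']
  exact map_cubeMap_apply hfac n ε y

def copyFace (i : Fin d) (b : Bool) (c : (Fin d → Bool) → X) : (Fin d → Bool) → X :=
  fun ε => c (update ε i b)

lemma cubePt_update (hcomm : ∀ i j, Commute (T i) (T j)) (n : Fin d → ℤ) (x : X) (i : Fin d)
    (b : Bool) (ε : Fin d → Bool) :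
    cubePt T n x (update ε i b) =
      cubePt T (update n i 0) (cubeMap T n (update (fun _ => false) i b) x) ε := by
  rw [cubePt, cubePt, ← homeomorphGroup_mul_apply, cubeMap_eq_zpowProd, cubeMap_eq_zpowProd,
    cubeMap_eq_zpowProd, ← zpowProd_add hcomm]
  refine congrArg (zpowProd T · x) (funext fun j => ?_)
  rcases eq_or_ne j i with rfl | hj <;> simp [*]

lemma mapsTo_copyFace (hcomm : ∀ i j, Commute (T i) (T j)) (i : Fin d) (b : Bool) :
    MapsTo (copyFace i b) (cubes T) (cubes T) :=
  mapsTo_cubes (continuous_pi fun _ => continuous_apply _) fun n x =>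
    ⟨_, _, funext (cubePt_update hcomm n x i b)⟩

end Cubes

section DistalMaps

variable {Z : Type*}

lemma exists_idempotent_of_isCompact [TopologicalSpace Z] [T2Space Z] {B : Set (Z → Z)}
    (hne : B.Nonempty) (hB : IsCompact B) (hcomp : ∀ f ∈ B, ∀ g ∈ B, f ∘ g ∈ B) :
    ∃ u ∈ B, u ∘ u = u := by
  let _ : Semigroup B :=
    { mul := fun f g => ⟨f.1 ∘ g.1, hcomp _ f.2 _ g.2⟩
      mul_assoc := fun _ _ _ => rfl }
  have : CompactSpace B := isCompact_iff_compactSpace.mp hB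
  have : Nonempty B := hne.to_subtype
  obtain ⟨u, hu⟩ := exists_idempotent_of_compact_t2_of_continuous_mul_left fun g : B => by
    have hc : Continuous fun f : B => f.1 ∘ g.1 :=
      continuous_pi fun z => (continuous_apply (g.1 z)).comp continuous_subtype_val
    exact hc.subtype_mk _
  exact ⟨u, u.2, congrArg Subtype.val hu⟩

lemma comp_mem_closure [TopologicalSpace Z] {A : Set (Z → Z)} (hcont : ∀ f ∈ A, Continuous f)
    (hcomp : ∀ f ∈ A, ∀ g ∈ A, f ∘ g ∈ A) {p q : Z → Z} (hp : p ∈ closure A)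
    (hq : q ∈ closure A) : p ∘ q ∈ closure A := by
  have hleft : ∀ f ∈ A, f ∘ q ∈ closure A := fun f hf =>
    MapsTo.closure (fun g hg => hcomp f hf g hg)
      (continuous_pi fun z => (hcont f hf).comp (continuous_apply z)) hq
  have := MapsTo.closure hleft (continuous_pi fun z => continuous_apply (q z)) hp
  rwa [closure_closure] at this

variable [MetricSpace Z] {A : Set (Z → Z)}

lemma injective_of_mem_closure
    (hdist : ∀ z z', z ≠ z' → ∃ δ > 0, ∀ f ∈ A, δ ≤ dist (f z) (f z')) {p : Z → Z}
    (hp : p ∈ closure A) : Injective p := by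
  intro z z' h
  by_contra hne
  obtain ⟨δ, hδ, hA⟩ := hdist z z' hne
  have hclosed : IsClosed {f : Z → Z | δ ≤ dist (f z) (f z')} :=
    isClosed_le continuous_const ((continuous_apply z).dist (continuous_apply z'))
  have : δ ≤ dist (p z) (p z') := closure_minimal hA hclosed hp
  rw [h, dist_self] at this
  linarith

variable [CompactSpace Z]

lemma exists_comp_eq_id_of_mem_closure (hcont : ∀ f ∈ A, Continuous f)
    (hcomp : ∀ f ∈ A, ∀ g ∈ A, f ∘ g ∈ A) (hid : id ∈ A)
    (hdist : ∀ z z', z ≠ z' → ∃ δ > 0, ∀ f ∈ A, δ ≤ dist (f z) (f z')) {p : Z → Z}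
    (hp : p ∈ closure A) : ∃ q ∈ closure A, q ∘ p = id := by
  -- an idempotent of the compact semigroup `closure A ∘ p` is injective, hence the identity
  obtain ⟨u, ⟨q, hq, rfl⟩, hu⟩ := exists_idempotent_of_isCompact (B := (· ∘ p) '' closure A)
    ⟨id ∘ p, id, subset_closure hid, rfl⟩
    (isClosed_closure.isCompact.image (continuous_pi fun z => continuous_apply (p z)))
    (by
      rintro _ ⟨f, hf, rfl⟩ _ ⟨g, hg, rfl⟩
      exact ⟨f ∘ p ∘ g, comp_mem_closure hcont hcomp hf (comp_mem_closure hcont hcomp hp hg), rfl⟩)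
  have hinj := injective_of_mem_closure hdist (comp_mem_closure hcont hcomp hq hp)
  exact ⟨q, hq, funext fun z => hinj (congrFun hu z)⟩

lemma mem_closure_orbit_comm (hcont : ∀ f ∈ A, Continuous f)
    (hcomp : ∀ f ∈ A, ∀ g ∈ A, f ∘ g ∈ A) (hid : id ∈ A)
    (hdist : ∀ z z', z ≠ z' → ∃ δ > 0, ∀ f ∈ A, δ ≤ dist (f z) (f z')) {z w : Z}
    (hw : w ∈ closure ((· z) '' A)) : z ∈ closure ((· w) '' A) := by
  have hcl : closure ((· z) '' A) ⊆ (· z) '' closure A :=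
    closure_minimal (image_mono subset_closure)
      (isClosed_closure.isCompact.image (continuous_apply z)).isClosed
  obtain ⟨p, hp, rfl⟩ := hcl hw
  obtain ⟨q, hq, hqp⟩ := exists_comp_eq_id_of_mem_closure hcont hcomp hid hdist hp
  convert image_closure_subset_closure_image (continuous_apply (p z)) ⟨q, hq, rfl⟩ using 1
  exact (congrFun hqp z).symm

end DistalMaps

lemma exists_mem_closure_image_pair {Z : Type*} [TopologicalSpace Z] [CompactSpace Z] [T2Space Z]
    {A : Set (Z → Z)} {z z' w : Z} (hw : w ∈ closure ((· z') '' A)) :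
    ∃ v, (v, w) ∈ closure ((fun f => (f z, f z')) '' A) := by
  have hclosed : IsClosed (Prod.snd '' closure ((fun f => (f z, f z')) '' A)) :=
    (isClosed_closure.isCompact.image continuous_snd).isClosed
  obtain ⟨⟨v, w'⟩, hvw, rfl⟩ : w ∈ Prod.snd '' closure ((fun f => (f z, f z')) '' A) := by
    refine closure_minimal ?_ hclosed hw
    rintro _ ⟨f, hf, rfl⟩
    exact ⟨(f z, f z'), subset_closure ⟨f, hf, rfl⟩, rfl⟩
  exact ⟨v, hvw⟩

section FaceMaps

variable {Y : Type*} [TopologicalSpace Y] {S : Fin d → Y ≃ₜ Y}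

/-- `n ∈ ℤ^d` acts by the face transformations `S_i^{n_i}` on the faces `{ε | ε i = true}`,
and `g ∈ G` acts diagonally. -/
def faceMap (S : Fin d → Y ≃ₜ Y) (n : Fin d → ℤ) (g : Y ≃ₜ Y) (c : (Fin d → Bool) → Y) :
    (Fin d → Bool) → Y :=
  fun ε => cubeMap S n ε (g (c ε))

def faceMaps (S : Fin d → Y ≃ₜ Y) : Set (((Fin d → Bool) → Y) → (Fin d → Bool) → Y) :=
  {f | ∃ n, ∃ g ∈ genGroup S, f = faceMap S n g}

lemma continuous_faceMap (S : Fin d → Y ≃ₜ Y) (n : Fin d → ℤ) (g : Y ≃ₜ Y) :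
    Continuous (faceMap S n g) :=
  continuous_pi fun ε => (cubeMap S n ε).continuous.comp (g.continuous.comp (continuous_apply ε))

lemma faceMap_comp_faceMap (hcomm : ∀ i j, Commute (S i) (S j)) (n m : Fin d → ℤ)
    {g : Y ≃ₜ Y} (hg : g ∈ genGroup S) (h : Y ≃ₜ Y) :
    faceMap S n g ∘ faceMap S m h = faceMap S (n + m) (g * h) := by
  funext c ε
  have hgm := commute_of_mem_genGroup hcomm hg (cubeMap_mem_genGroup S m ε)
  simp only [comp_apply, faceMap, cubeMap_add hcomm, homeomorphGroup_mul_apply]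
  rw [← homeomorphGroup_mul_apply g, hgm.eq, homeomorphGroup_mul_apply]

lemma id_mem_faceMaps (S : Fin d → Y ≃ₜ Y) : id ∈ faceMaps S :=
  ⟨0, 1, one_mem _, funext fun c => funext fun ε => by simp [faceMap, cubeMap_zero]⟩

lemma comp_mem_faceMaps (hcomm : ∀ i j, Commute (S i) (S j)) {f f'} (hf : f ∈ faceMaps S)
    (hf' : f' ∈ faceMaps S) : f ∘ f' ∈ faceMaps S := by
  obtain ⟨n, g, hg, rfl⟩ := hf
  obtain ⟨m, h, hh, rfl⟩ := hf'
  exact ⟨n + m, g * h, mul_mem hg hh, faceMap_comp_faceMap hcomm n m hg h⟩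

lemma mapsTo_cubes_of_mem_faceMaps (hcomm : ∀ i j, Commute (S i) (S j)) {f}
    (hf : f ∈ faceMaps S) : MapsTo f (cubes S) (cubes S) := by
  obtain ⟨n, g, hg, rfl⟩ := hf
  refine mapsTo_cubes (continuous_faceMap S n g) fun m y => ⟨n + m, g y, ?_⟩
  have : cubePt S m y = faceMap S m 1 fun _ => y := rfl
  rw [this, ← comp_apply (f := faceMap S n g), faceMap_comp_faceMap hcomm n m hg, mul_one]
  rfl

lemma exists_apply_faceMaps {f} (hf : f ∈ faceMaps S) (ε : Fin d → Bool) :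
    ∃ g ∈ genGroup S, ∀ c, f c ε = g (c ε) := by
  obtain ⟨n, g, hg, rfl⟩ := hf
  exact ⟨cubeMap S n ε * g, mul_mem (cubeMap_mem_genGroup S n ε) hg, fun _ => rfl⟩

end FaceMaps

section OrbitPairs

variable {X : Type*} [TopologicalSpace X]

def orbitPairs (T : Fin d → X ≃ₜ X) (a b : X) : Set (X × X) :=
  (fun g : X ≃ₜ X => (g a, g b)) '' genGroup T

lemma mem_closure_orbitPairs_apply {Y : Type*} [TopologicalSpace Y] {S : Fin d → Y ≃ₜ Y}
    {V V' c c' : (Fin d → Bool) → Y}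
    (h : (c, c') ∈ closure ((fun f => (f V, f V')) '' faceMaps S)) (ε : Fin d → Bool) :
    (c ε, c' ε) ∈ closure (orbitPairs S (V ε) (V' ε)) := by
  refine MapsTo.closure (f := fun p => (p.1 ε, p.2 ε)) ?_
    ((continuous_apply ε).prodMap (continuous_apply ε)) h
  rintro _ ⟨f, hf, rfl⟩
  obtain ⟨g, hg, hfg⟩ := exists_apply_faceMaps hf ε
  exact ⟨g, hg, by simp only [hfg]⟩

lemma map_mem_closure_orbitPairs {Y : Type*} [TopologicalSpace Y] {S : Fin d → Y ≃ₜ Y}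
    {T : Fin d → X ≃ₜ X} {π : Y → X} (hπ : Continuous π) (hfac : ∀ i y, π (S i y) = T i (π y))
    {a b a' b' : Y} (h : (a', b') ∈ closure (orbitPairs S a b)) :
    (π a', π b') ∈ closure (orbitPairs T (π a) (π b)) := by
  refine MapsTo.closure (f := Prod.map π π) ?_ (hπ.prodMap hπ) h
  rintro _ ⟨g, hg, rfl⟩
  obtain ⟨k, hk, hgk⟩ := exists_intertwining_of_mem_genGroup hfac hg
  exact ⟨k, hk, by simp only [Prod.map, hgk]⟩

end OrbitPairs

lemma eq_iff_of_mem_closure_orbitPairs {X : Type*} [MetricSpace X] {T : Fin d → X ≃ₜ X}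
    (hdist : IsDistalSystem T) {a b a' b' : X} (h : (a', b') ∈ closure (orbitPairs T a b)) :
    a' = b' ↔ a = b := by
  constructor
  · intro hab'
    by_contra hab
    obtain ⟨δ, hδ, hG⟩ := hdist a b hab
    have hclosed : IsClosed {p : X × X | δ ≤ dist p.1 p.2} :=
      isClosed_le continuous_const continuous_dist
    have : δ ≤ dist a' b' := closure_minimal (by rintro _ ⟨g, hg, rfl⟩; exact hG g hg) hclosed h
    rw [hab', dist_self] at this
    linarith
  · rintro rfl
    exact closure_minimal (by rintro _ ⟨g, -, rfl⟩; rfl) isClosed_diagonal h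

section FaceOrbits

variable {Y : Type*} [MetricSpace Y] {S : Fin d → Y ≃ₜ Y}

lemma faceMaps_distal (hdist : IsDistalSystem S) {c c' : (Fin d → Bool) → Y} (hne : c ≠ c') :
    ∃ δ > 0, ∀ f ∈ faceMaps S, δ ≤ dist (f c) (f c') := by
  obtain ⟨ε, hε⟩ := ne_iff.1 hne
  obtain ⟨δ, hδ, hG⟩ := hdist _ _ hε
  refine ⟨δ, hδ, fun f hf => ?_⟩
  obtain ⟨g, hg, hfg⟩ := exists_apply_faceMaps hf ε
  calc δ ≤ dist (g (c ε)) (g (c' ε)) := hG g hg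
    _ = dist (f c ε) (f c' ε) := by rw [hfg, hfg]
    _ ≤ dist (f c) (f c') := dist_le_pi_dist _ _ ε

lemma cubes_subset_closure_faceOrbit (hmin : IsMinimalSystem S) (y₀ : Y) :
    cubes S ⊆ closure ((· fun _ => y₀) '' faceMaps S) := by
  refine closure_minimal ?_ isClosed_closure
  rintro _ ⟨y, n, hc⟩
  rw [show _ = cubePt S n y from funext hc]
  have hy : y ∈ closure {y' | ∃ g ∈ genGroup S, g y₀ = y'} := (hmin y₀).closure_eq ▸ trivial
  refine MapsTo.closure ?_ (continuous_cubePt S n) hy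
  rintro _ ⟨g, hg, rfl⟩
  exact ⟨faceMap S n g, ⟨n, g, hg, rfl⟩, rfl⟩

variable [CompactSpace Y]

lemma exists_mem_closure_faceOrbit_const (hcomm : ∀ i j, Commute (S i) (S j))
    (hmin : IsMinimalSystem S) (hdist : IsDistalSystem S) (y₀ : Y) {V V' : (Fin d → Bool) → Y}
    (hV : V ∈ cubes S) (hV' : V' ∈ cubes S) :
    ∃ c ∈ cubes S, (c, fun _ => y₀) ∈ closure ((fun f => (f V, f V')) '' faceMaps S) := by
  have hret : (fun _ => y₀) ∈ closure ((· V') '' faceMaps S) :=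
    mem_closure_orbit_comm
      (fun f hf => by obtain ⟨n, g, -, rfl⟩ := hf; exact continuous_faceMap S n g)
      (fun _ hf _ hf' => comp_mem_faceMaps hcomm hf hf') (id_mem_faceMaps S)
      (fun _ _ => faceMaps_distal hdist) (cubes_subset_closure_faceOrbit hmin y₀ hV')
  obtain ⟨c, hc⟩ := exists_mem_closure_image_pair (z := V) hret
  have hfst : closure ((fun f => (f V, f V')) '' faceMaps S) ⊆ Prod.fst ⁻¹' cubes S :=
    closure_minimal (by rintro _ ⟨f, hf, rfl⟩; exact mapsTo_cubes_of_mem_faceMaps hcomm hf hV)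
      (isClosed_closure.preimage continuous_fst)
  exact ⟨c, hfst hc, hc⟩

end FaceOrbits

lemma map_eq_iff_of_mem_closure_faceOrbit {Y X : Type*} [TopologicalSpace Y] [MetricSpace X]
    {S : Fin d → Y ≃ₜ Y} {T : Fin d → X ≃ₜ X} {π : Y → X} (hdist : IsDistalSystem T)
    (hπ : Continuous π) (hfac : ∀ i y, π (S i y) = T i (π y)) {V V' c c' : (Fin d → Bool) → Y}
    (h : (c, c') ∈ closure ((fun f => (f V, f V')) '' faceMaps S)) (ε : Fin d → Bool) :
    π (c ε) = π (c' ε) ↔ π (V ε) = π (V' ε) :=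
  eq_iff_of_mem_closure_orbitPairs hdist
    (map_mem_closure_orbitPairs hπ hfac (mem_closure_orbitPairs_apply h ε))

section Collapse

variable {Y X : Type*} [MetricSpace Y] [CompactSpace Y] [MetricSpace X]
  {S : Fin d → Y ≃ₜ Y} {T : Fin d → X ≃ₜ X} {π : Y → X} {y₀ : Y} {ε₀ : Fin d → Bool}

lemma exists_collapse_insert (hcomm : ∀ i j, Commute (S i) (S j)) (hmin : IsMinimalSystem S)
    (hdistS : IsDistalSystem S) (hdistT : IsDistalSystem T) (hπ : Continuous π)
    (hfac : ∀ i y, π (S i y) = T i (π y)) {s : Finset (Fin d)} (i : Fin d)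
    {V : (Fin d → Bool) → Y} (hV : V ∈ cubes S) (hsep : ∀ ε, π (V ε) = π y₀ ↔ ε ≠ ε₀)
    (hs : ∀ ε, (∃ j ∈ s, ε j ≠ ε₀ j) → V ε = y₀) :
    ∃ V' ∈ cubes S, (∀ ε, π (V' ε) = π y₀ ↔ ε ≠ ε₀) ∧
      ∀ ε, (∃ j ∈ insert i s, ε j ≠ ε₀ j) → V' ε = y₀ := by
  have hW : copyFace i (!ε₀ i) V ∈ cubes S := mapsTo_copyFace hcomm i _ hV
  have hπW : ∀ ε, π (copyFace i (!ε₀ i) V ε) = π y₀ := fun ε =>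
    (hsep _).2 fun h => by simpa using congrFun h i
  obtain ⟨c, hc, hK⟩ := exists_mem_closure_faceOrbit_const hcomm hmin hdistS y₀ hV hW
  refine ⟨c, hc, fun ε => ?_, fun ε hε => ?_⟩
  · exact (map_eq_iff_of_mem_closure_faceOrbit hdistT hπ hfac hK ε).trans <| by
      rw [hπW, hsep]
  · refine (eq_iff_of_mem_closure_orbitPairs hdistS (mem_closure_orbitPairs_apply hK ε)).2 ?_
    change V ε = V (update ε i (!ε₀ i))
    by_cases hi : ε i = ε₀ i
    · obtain ⟨j, hj, hjε⟩ := hε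
      have hji : j ≠ i := by rintro rfl; exact hjε hi
      have hjs : j ∈ s := (Finset.mem_insert.1 hj).resolve_left hji
      rw [hs ε ⟨j, hjs, hjε⟩, hs _ ⟨j, hjs, by rwa [update_of_ne hji]⟩]
    · rw [show (!ε₀ i) = ε i by revert hi; cases ε i <;> cases ε₀ i <;> decide, update_eq_self]

lemma exists_collapse (hcomm : ∀ i j, Commute (S i) (S j)) (hmin : IsMinimalSystem S)
    (hdistS : IsDistalSystem S) (hdistT : IsDistalSystem T) (hπ : Continuous π)
    (hfac : ∀ i y, π (S i y) = T i (π y)) {V : (Fin d → Bool) → Y} (hV : V ∈ cubes S)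
    (hsep : ∀ ε, π (V ε) = π y₀ ↔ ε ≠ ε₀) :
    ∃ V' ∈ cubes S, (∀ ε, π (V' ε) = π y₀ ↔ ε ≠ ε₀) ∧ ∀ ε ≠ ε₀, V' ε = y₀ := by
  suffices ∀ s : Finset (Fin d), ∃ V' ∈ cubes S, (∀ ε, π (V' ε) = π y₀ ↔ ε ≠ ε₀) ∧
      ∀ ε, (∃ j ∈ s, ε j ≠ ε₀ j) → V' ε = y₀ by
    obtain ⟨V', hV', hsep', hconst⟩ := this Finset.univ
    exact ⟨V', hV', hsep', fun ε hε => hconst ε (by simpa using ne_iff.1 hε)⟩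
  intro s
  induction s using Finset.induction_on with
  | empty => exact ⟨V, hV, hsep, by simp⟩
  | insert i s _ ih =>
    obtain ⟨V', hV', hsep', hs⟩ := ih
    exact exists_collapse_insert hcomm hmin hdistS hdistT hπ hfac i hV' hsep' hs

end Collapse

theorem ucp_of_factor_general {Y X : Type*} [MetricSpace Y] [CompactSpace Y]
    [MetricSpace X] {d : ℕ}
    (S : Fin d → Y ≃ₜ Y) (T : Fin d → X ≃ₜ X)
    (hcommS : ∀ i j : Fin d, ∀ y : Y, S i (S j y) = S j (S i y))
    (hminS : IsMinimalSystem S) (hdistS : IsDistalSystem S)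
    (hdistT : IsDistalSystem T)
    (π : Y → X) (hcont : Continuous π) (hsurj : Function.Surjective π)
    (hfac : ∀ (i : Fin d) (y : Y), π (S i y) = T i (π y))
    (hucp : HasUCP S) : HasUCP T := by
  have hcomm : ∀ i j, Commute (S i) (S j) := fun i j => Homeomorph.ext (hcommS i j)
  intro x hx x' hx' ε₀ hagree
  obtain ⟨C, hC, rfl⟩ := exists_map_eq_of_mem_cubes hcont hsurj hfac hx
  obtain ⟨C', hC', rfl⟩ := exists_map_eq_of_mem_cubes hcont hsurj hfac hx'
  by_contra hne
  have hne₀ : π (C ε₀) ≠ π (C' ε₀) := fun h => hne <| funext fun ε => by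
    by_cases hε : ε = ε₀
    · exact hε ▸ h
    · exact hagree ε hε
  obtain ⟨V, hV, hK⟩ := exists_mem_closure_faceOrbit_const hcomm hminS hdistS (C ε₀) hC hC'
  have hsep : ∀ ε, π (V ε) = π (C ε₀) ↔ ε ≠ ε₀ := fun ε =>
    (map_eq_iff_of_mem_closure_faceOrbit hdistT hcont hfac hK ε).trans
      ⟨fun h hε => hne₀ (hε ▸ h), hagree ε⟩
  obtain ⟨V', hV', hsep', hconst⟩ := exists_collapse hcomm hminS hdistS hdistT hcont hfac hV hsep
  have hV'_eq := hucp _ (const_mem_cubes S (C ε₀)) V' hV' ε₀ fun ε hε => (hconst ε hε).symm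
  exact (hsep' ε₀).1 (by rw [← hV'_eq]) rfl

/-- **Corollary `cor1`.**  If `π : Y → X` is a factor map between minimal distal
`ℤ^d`-systems and `Y` has the unique closing parallelepiped property, then so does `X`. -/
theorem ucp_of_factor {Y X : Type*} [MetricSpace Y] [CompactSpace Y]
    [MetricSpace X] [CompactSpace X] {d : ℕ}
    (S : Fin d → Y ≃ₜ Y) (T : Fin d → X ≃ₜ X)
    (hcommS : ∀ i j : Fin d, ∀ y : Y, S i (S j y) = S j (S i y))
    (hcommT : ∀ i j : Fin d, ∀ x : X, T i (T j x) = T j (T i x))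
    (hminS : IsMinimalSystem S) (hdistS : IsDistalSystem S)
    (hminT : IsMinimalSystem T) (hdistT : IsDistalSystem T)
    (π : Y → X) (hcont : Continuous π) (hsurj : Function.Surjective π)
    (hfac : ∀ (i : Fin d) (y : Y), π (S i y) = T i (π y))
    (hucp : HasUCP S) : HasUCP T :=
  ucp_of_factor_general S T hcommS hminS hdistS hdistT π hcont hsurj hfac hucp
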